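/- arXiv:1701.00129 — 5 statements merged into one kernel-verified Lean document; each statement's English description precedes it below -/
import Mathlib

section
/- For every γ ∈ (-1, -1/2) and all real numbers s₁ ≠ s₂, one has ∫_ℝ (s₁ - u)₊^γ (s₂ - u)₊^γ du = B(γ+1, -2γ-1) · |s₂ - s₁|^{2γ+1}. -/
open MeasureTheory

/-- `(x)₊^γ`: `x ^ γ` if `x > 0`, and `0` otherwise. -/
noncomputable def pospow (x γ : ℝ) : ℝ := if 0 < x then x ^ γ else 0

/-- The Euler Beta function. -/
noncomputable def eulerBeta (p q : ℝ) : ℝ := ∫ x in (0:ℝ)..1, x ^ (p - 1) * (1 - x) ^ (q - 1)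

/-!
Substituting `u = s₁ - (s₂ - s₁) x` (for `s₁ < s₂`) turns the integral into
`(s₂ - s₁) ^ (2γ + 1) ∫₀^∞ x ^ γ (1 + x) ^ γ dx`, and `y ↦ y / (1 - y)` identifies the last
integral with `B(γ + 1, -2γ - 1)`.
-/

open Set

lemma pospow_mul_of_pos {t : ℝ} (ht : 0 < t) (x γ : ℝ) :
    pospow (t * x) γ = t ^ γ * pospow x γ := by
  unfold pospow
  by_cases hx : 0 < x
  · rw [if_pos (mul_pos ht hx), if_pos hx, Real.mul_rpow ht.le hx.le]
  · rw [if_neg (fun h => hx (pos_of_mul_pos_right h ht.le)), if_neg hx, mul_zero]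

lemma image_div_one_sub_Ioo : (fun y : ℝ => y / (1 - y)) '' Ioo 0 1 = Ioi 0 := by
  ext x
  constructor
  · rintro ⟨y, ⟨hy0, hy1⟩, rfl⟩
    exact div_pos hy0 (sub_pos.mpr hy1)
  · intro (hx : 0 < x)
    refine ⟨x / (1 + x), ⟨by positivity, (div_lt_one (by positivity)).mpr (by linarith)⟩, ?_⟩
    field_simp
    ring

lemma hasDerivAt_div_one_sub {y : ℝ} (hy : y ≠ 1) :
    HasDerivAt (fun y : ℝ => y / (1 - y)) ((1 - y) ^ 2)⁻¹ y := by
  have hy' : 1 - y ≠ 0 := sub_ne_zero.mpr hy.symm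
  have h := (hasDerivAt_id' y).div ((hasDerivAt_const y 1).sub (hasDerivAt_id' y)) hy'
  refine h.congr_deriv ?_
  simp only [Pi.sub_apply]
  field_simp
  ring

lemma injOn_div_one_sub : InjOn (fun y : ℝ => y / (1 - y)) (Iio 1) := by
  intro a (ha : a < 1) b (hb : b < 1) h
  have ha' : 1 - a ≠ 0 := by linarith
  have hb' : 1 - b ≠ 0 := by linarith
  field_simp at h
  linarith

lemma eulerBeta_eq_integral_Ioi (p q : ℝ) :
    eulerBeta p q = ∫ x in Ioi 0, x ^ (p - 1) * (1 + x) ^ (-(p + q)) := by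
  rw [← image_div_one_sub_Ioo, integral_image_eq_integral_abs_deriv_smul measurableSet_Ioo
      (fun y hy => (hasDerivAt_div_one_sub hy.2.ne).hasDerivWithinAt)
      (injOn_div_one_sub.mono fun y hy => hy.2),
    eulerBeta, intervalIntegral.integral_of_le zero_le_one, integral_Ioc_eq_integral_Ioo]
  refine setIntegral_congr_fun measurableSet_Ioo fun y ⟨hy0, hy1⟩ => ?_
  have h1 : 0 < 1 - y := sub_pos.mpr hy1
  have hsum : 1 + y / (1 - y) = (1 - y)⁻¹ := by field_simp; ring
  have hjac : ((1 - y) ^ 2)⁻¹ = (1 - y) ^ (-2 : ℝ) := by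
    rw [Real.rpow_neg h1.le, Real.rpow_two]
  simp only [smul_eq_mul]
  rw [abs_of_pos (by positivity), hjac, hsum, Real.div_rpow hy0.le h1.le, Real.inv_rpow h1.le,
    ← Real.rpow_neg h1.le, div_eq_mul_inv, ← Real.rpow_neg h1.le]
  rw [show (1 - y) ^ (-2 : ℝ) * (y ^ (p - 1) * (1 - y) ^ (-(p - 1)) * (1 - y) ^ (-(-(p + q))))
      = y ^ (p - 1) * ((1 - y) ^ (-2 : ℝ) * (1 - y) ^ (-(p - 1)) * (1 - y) ^ (-(-(p + q))))
      by ring, ← Real.rpow_add h1, ← Real.rpow_add h1]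
  congr 2
  ring

lemma integral_pospow_mul_pospow_one_add (γ : ℝ) :
    ∫ x, pospow x γ * pospow (1 + x) γ = eulerBeta (γ + 1) (-2 * γ - 1) := by
  have hsupp : ∀ x ∉ Ioi (0 : ℝ), pospow x γ * pospow (1 + x) γ = 0 := fun x (hx : ¬ 0 < x) => by
    rw [pospow, if_neg hx, zero_mul]
  rw [← setIntegral_eq_integral_of_forall_compl_eq_zero hsupp, eulerBeta_eq_integral_Ioi]
  refine setIntegral_congr_fun measurableSet_Ioi fun x (hx : 0 < x) => ?_
  rw [pospow, pospow, if_pos hx, if_pos (by linarith), show γ + 1 - 1 = γ by ring,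
    show -(γ + 1 + (-2 * γ - 1)) = γ by ring]

lemma integral_pospow_sub_mul_pospow_sub_of_lt (γ : ℝ) {a b : ℝ} (hab : a < b) :
    ∫ u, pospow (a - u) γ * pospow (b - u) γ
      = eulerBeta (γ + 1) (-2 * γ - 1) * (b - a) ^ (2 * γ + 1) := by
  set t := b - a
  have ht : 0 < t := sub_pos.mpr hab
  set F : ℝ → ℝ := fun u => pospow (a - u) γ * pospow (b - u) γ
  have hF : ∀ x, F (a - t * x) = t ^ (2 * γ) * (pospow x γ * pospow (1 + x) γ) := fun x => by
    simp only [F, show a - (a - t * x) = t * x by ring,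
      show b - (a - t * x) = t * (1 + x) by ring, pospow_mul_of_pos ht]
    rw [two_mul, Real.rpow_add ht]
    ring
  have hscale : ∫ u, F u = t * ∫ x, F (a - t * x) := by
    rw [Measure.integral_comp_mul_left (fun z => F (a - z)), integral_sub_left_eq_self F,
      abs_of_pos (inv_pos.mpr ht), smul_eq_mul, mul_inv_cancel_left₀ ht.ne']
  rw [hscale, integral_congr_ae (ae_of_all _ hF), integral_const_mul,
    integral_pospow_mul_pospow_one_add, Real.rpow_add ht, Real.rpow_one]
  ring

theorem integral_pospow_mul_pospow_general (γ : ℝ)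
    (s₁ s₂ : ℝ) (hs : s₁ ≠ s₂) :
    ∫ u : ℝ, pospow (s₁ - u) γ * pospow (s₂ - u) γ
      = eulerBeta (γ + 1) (-2 * γ - 1) * |s₂ - s₁| ^ (2 * γ + 1) := by
  rcases hs.lt_or_gt with h | h
  · rw [integral_pospow_sub_mul_pospow_sub_of_lt γ h, abs_of_pos (sub_pos.mpr h)]
  · simp_rw [mul_comm (pospow (s₁ - _) γ)]
    rw [integral_pospow_sub_mul_pospow_sub_of_lt γ h, abs_sub_comm, abs_of_pos (sub_pos.mpr h)]

theorem integral_pospow_mul_pospow (γ : ℝ) (hγ : γ ∈ Set.Ioo (-1 : ℝ) (-(1/2)))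
    (s₁ s₂ : ℝ) (hs : s₁ ≠ s₂) :
    ∫ u : ℝ, pospow (s₁ - u) γ * pospow (s₂ - u) γ
      = eulerBeta (γ + 1) (-2 * γ - 1) * |s₂ - s₁| ^ (2 * γ + 1) :=
  integral_pospow_mul_pospow_general γ s₁ s₂ hs
end

section
/- Let H ∈ (1/2, 1). Set C_H = max_{u ∈ [0,1/2]} ((1-u)^{2H-2} - (1+u)^{2H-2}). Then for all real numbers t₁ > t₂ and every ε with 0 < ε < (t₁ - t₂)/2, one has |(1/ε²) ∫_{t₁}^{t₁+ε} ∫_{t₂}^{t₂+ε} (|s-r|^{2H-2} - |s-t₂|^{2H-2} - |t₁-r|^{2H-2} + |t₁-t₂|^{2H-2}) dr ds| ≤ (t₁-t₂-ε)^{2H-2} - (t₁-t₂+ε)^{2H-2} ≤ C_H · (t₁-t₂)^{2H-2}. -/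
/-!
Put `d = t₁ - t₂`, `p = 2H - 2 ≤ 0` and `f x = x ^ p`, which is convex and decreasing on `(0, ∞)`.
With `x = s - t₂ ∈ [d, d + ε]` and `h = r - t₂ ∈ [0, ε]` the integrand is the mixed difference
`f (x - h) - f x - f (d - h) + f d`. Since increments of a convex function grow, it is `≤ 0`;
since `f` decreases, it is `≥ f d - f (d - h) ≥ f (d + ε) - f (d - ε)`. Averaging over the square
keeps this bound. The second inequality is the scaling `(d ∓ ε) ^ p = d ^ p (1 ∓ ε / d) ^ p`
with `ε / d ∈ [0, 1/2]`.
-/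

open MeasureTheory Set

theorem Real.convexOn_rpow_of_nonpos {p : ℝ} (hp : p ≤ 0) :
    ConvexOn ℝ (Ioi 0) fun x : ℝ => x ^ p := by
  have hdiff : ∀ q : ℝ, DifferentiableOn ℝ (fun x : ℝ => x ^ q) (Ioi 0) := fun q x hx =>
    (Real.differentiableAt_rpow_const_of_ne q (ne_of_gt hx)).differentiableWithinAt
  refine convexOn_of_deriv2_nonneg' (convex_Ioi 0) (hdiff p) ?_ fun x hx => ?_
  · rw [Real.deriv_rpow_const']
    exact (hdiff (p - 1)).const_mul p
  · rw [Real.iter_deriv_rpow_const]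
    have hx : 0 < x := hx
    have hpp : 0 ≤ p * (p - 1) := mul_nonneg_of_nonpos_of_nonpos hp (by linarith)
    simpa [descPochhammer_succ_right] using mul_nonneg hpp (Real.rpow_nonneg hx.le (p - 2))

theorem ConvexOn.sub_map_sub_le_sub_map_sub {s : Set ℝ} {f : ℝ → ℝ} (hf : ConvexOn ℝ s f)
    {x y h : ℝ} (hxy : x ≤ y) (hh : 0 ≤ h) (hx : x - h ∈ s) (hy : y ∈ s) :
    f x - f (x - h) ≤ f y - f (y - h) := by
  rcases (add_nonneg (sub_nonneg.2 hxy) hh).eq_or_lt with hd | hd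
  · obtain rfl : h = 0 := by linarith
    simp
  have ha : 0 ≤ h / (y - x + h) := by positivity
  have hb : 0 ≤ (y - x) / (y - x + h) := div_nonneg (by linarith) hd.le
  have hab : h / (y - x + h) + (y - x) / (y - x + h) = 1 := by field_simp; ring
  -- `y - h` and `x` are convex combinations of `x - h` and `y` with swapped weights.
  have h1 := hf.2 hx hy ha hb hab
  have h2 := hf.2 hx hy hb ha (by rw [add_comm, hab])
  have e1 : h / (y - x + h) * (x - h) + (y - x) / (y - x + h) * y = y - h := by field_simp; ring
  have e2 : (y - x) / (y - x + h) * (x - h) + h / (y - x + h) * y = x := by field_simp; ring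
  simp only [smul_eq_mul, e1, e2] at h1 h2
  linear_combination h1 + h2 + (f (x - h) + f y) * hab

theorem ConvexOn.abs_mixed_difference_le {s : Set ℝ} {f : ℝ → ℝ}
    (hf : ConvexOn ℝ s f) (hf' : AntitoneOn f s) {x y h ε : ℝ} (hyx : y ≤ x) (hxy : x ≤ y + ε)
    (hh : 0 ≤ h) (hhε : h ≤ ε) (hl : y - ε ∈ s) (hr : y + ε ∈ s) :
    |f (x - h) - f x - f (y - h) + f y| ≤ f (y - ε) - f (y + ε) := by
  have mem : ∀ z, y - ε ≤ z → z ≤ y + ε → z ∈ s := fun z h₁ h₂ =>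
    (convex_iff_ordConnected.1 hf.1).out hl hr ⟨h₁, h₂⟩
  have incr := hf.sub_map_sub_le_sub_map_sub hyx hh (mem _ (by linarith) (by linarith))
    (mem _ (by linarith) hxy)
  have hx : f x ≤ f (x - h) :=
    hf' (mem _ (by linarith) (by linarith)) (mem _ (by linarith) hxy) (by linarith)
  have hyh : f (y - h) ≤ f (y - ε) := hf' hl (mem _ (by linarith) (by linarith)) (by linarith)
  have hyε : f (y + ε) ≤ f y := hf' (mem _ (by linarith) (by linarith)) hr (by linarith)
  have hends : f (y + ε) ≤ f (y - ε) := hf' hl hr (by linarith)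
  rw [abs_le]
  constructor <;> linarith

theorem abs_one_div_sq_mul_integral_integral_le {F : ℝ → ℝ → ℝ} {a b ε M : ℝ} (hε : 0 < ε)
    (hF : ∀ s ∈ Ioc a (a + ε), ∀ r ∈ Ioc b (b + ε), |F s r| ≤ M) :
    |(1 / ε ^ 2) * ∫ s in a..(a + ε), ∫ r in b..(b + ε), F s r| ≤ M := by
  have hI : ∀ c : ℝ, uIoc c (c + ε) = Ioc c (c + ε) := fun c => uIoc_of_le (by linarith)
  have inner : ∀ s ∈ uIoc a (a + ε), ‖∫ r in b..(b + ε), F s r‖ ≤ M * ε := fun s hs => by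
    simpa [abs_of_pos hε] using
      intervalIntegral.norm_integral_le_of_norm_le_const (f := F s) fun r hr =>
        (hF s (hI a ▸ hs) r (hI b ▸ hr) : ‖F s r‖ ≤ M)
  have outer := intervalIntegral.norm_integral_le_of_norm_le_const inner
  rw [add_sub_cancel_left, abs_of_pos hε, Real.norm_eq_abs] at outer
  calc |(1 / ε ^ 2) * ∫ s in a..(a + ε), ∫ r in b..(b + ε), F s r|
      ≤ 1 / ε ^ 2 * (M * ε * ε) := by
        rw [abs_mul, abs_of_pos (by positivity)]
        gcongr
    _ = M := by field_simp

theorem sub_rpow_sub_add_rpow_eq_rpow_mul {d ε p : ℝ} (hd : 0 < d) (hε : 0 ≤ ε) (hεd : ε ≤ d) :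
    (d - ε) ^ p - (d + ε) ^ p = d ^ p * ((1 - ε / d) ^ p - (1 + ε / d) ^ p) := by
  have hu : ε / d ≤ 1 := (div_le_one hd).2 hεd
  rw [mul_sub, ← Real.mul_rpow hd.le (by linarith), ← Real.mul_rpow hd.le (by positivity),
    mul_one_sub, mul_one_add, mul_div_cancel₀ _ hd.ne']

theorem increment_rectangle_bound_general (H : ℝ) (hH : H ∈ Set.Ioo (1/2 : ℝ) 1)
    (t₁ t₂ : ℝ) (ε : ℝ) (hε : 0 < ε) (hε' : ε < (t₁ - t₂) / 2) :
    |(1 / ε ^ 2) * ∫ s in t₁..(t₁ + ε), ∫ r in t₂..(t₂ + ε),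
        (|s - r| ^ (2 * H - 2) - |s - t₂| ^ (2 * H - 2)
          - |t₁ - r| ^ (2 * H - 2) + |t₁ - t₂| ^ (2 * H - 2))|
      ≤ (t₁ - t₂ - ε) ^ (2 * H - 2) - (t₁ - t₂ + ε) ^ (2 * H - 2) ∧
    (t₁ - t₂ - ε) ^ (2 * H - 2) - (t₁ - t₂ + ε) ^ (2 * H - 2)
      ≤ (sSup ((fun u => (1 - u) ^ (2 * H - 2) - (1 + u) ^ (2 * H - 2)) '' Set.Icc (0:ℝ) (1/2)))
          * (t₁ - t₂) ^ (2 * H - 2) := by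
  set p := 2 * H - 2
  have hp : p ≤ 0 := by linarith [hH.2]
  have hd : 0 < t₁ - t₂ := by linarith
  constructor
  · refine abs_one_div_sq_mul_integral_integral_le hε fun s ⟨hs₁, hs₂⟩ r ⟨hr₁, hr₂⟩ => ?_
    rw [abs_of_pos (by linarith : 0 < s - r), abs_of_pos (by linarith : 0 < s - t₂),
      abs_of_pos (by linarith : 0 < t₁ - r), abs_of_pos hd,
      show s - r = (s - t₂) - (r - t₂) by ring, show t₁ - r = (t₁ - t₂) - (r - t₂) by ring]
    exact (Real.convexOn_rpow_of_nonpos hp).abs_mixed_difference_le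
      (Real.antitoneOn_rpow_Ioi_of_exponent_nonpos hp) (by linarith) (by linarith) (by linarith)
      (by linarith) (mem_Ioi.2 (by linarith)) (mem_Ioi.2 (by linarith))
  · have hu : ε / (t₁ - t₂) ∈ Icc (0 : ℝ) (1 / 2) :=
      ⟨by positivity, by rw [div_le_iff₀ hd]; linarith⟩
    have hg : ContinuousOn (fun u : ℝ => (1 - u) ^ p - (1 + u) ^ p) (Icc 0 (1 / 2)) := by
      refine ContinuousOn.sub ?_ ?_ <;>
        refine ContinuousOn.rpow_const (by fun_prop) fun v hv => Or.inl (ne_of_gt ?_) <;>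
        linarith [hv.1, hv.2]
    rw [sub_rpow_sub_add_rpow_eq_rpow_mul hd hε.le (by linarith), mul_comm]
    exact mul_le_mul_of_nonneg_right (hg.le_sSup_image_Icc hu) (Real.rpow_nonneg hd.le p)

theorem increment_rectangle_bound (H : ℝ) (hH : H ∈ Set.Ioo (1/2 : ℝ) 1)
    (t₁ t₂ : ℝ) (h12 : t₂ < t₁) (ε : ℝ) (hε : 0 < ε) (hε' : ε < (t₁ - t₂) / 2) :
    |(1 / ε ^ 2) * ∫ s in t₁..(t₁ + ε), ∫ r in t₂..(t₂ + ε),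
        (|s - r| ^ (2 * H - 2) - |s - t₂| ^ (2 * H - 2)
          - |t₁ - r| ^ (2 * H - 2) + |t₁ - t₂| ^ (2 * H - 2))|
      ≤ (t₁ - t₂ - ε) ^ (2 * H - 2) - (t₁ - t₂ + ε) ^ (2 * H - 2) ∧
    (t₁ - t₂ - ε) ^ (2 * H - 2) - (t₁ - t₂ + ε) ^ (2 * H - 2)
      ≤ (sSup ((fun u => (1 - u) ^ (2 * H - 2) - (1 + u) ^ (2 * H - 2)) '' Set.Icc (0:ℝ) (1/2)))
          * (t₁ - t₂) ^ (2 * H - 2) :=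
  increment_rectangle_bound_general H hH t₁ t₂ ε hε hε'
end

section
/- Let α ∈ (0, 1/2) and let a < b be real numbers. There exists a constant C = C(a, b, α) > 0 such that for every φ ∈ L²(ℝ) the function t ↦ I₊^α(φ)(t) is defined almost everywhere on (a, b), belongs to L²((a, b)), and ‖I₊^α(φ)‖_{L²((a,b))} ≤ C ‖φ‖_{L²(ℝ)}. -/
open MeasureTheory

/-- Left-sided fractional integral of order `α` on the real line:
`I₊^α(φ)(t) = (1/Γ(α)) ∫_{-∞}^t (t-s)^{α-1} φ(s) ds`. -/
noncomputable def Iplus (α : ℝ) (φ : ℝ → ℝ) (t : ℝ) : ℝ :=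
  (1 / Real.Gamma α) * ∫ s in Set.Iio t, (t - s) ^ (α - 1) * φ s

/-!
Up to the factor `1 / Γ(α)`, `|I₊^α φ|` is dominated by the positive integral operator with kernel
`K(t, s) = (t - s)^(α - 1) 1_{s < t}` acting on `|φ|`. Since `K(t, ·)` is not integrable at `-∞`,
the plain Schur test does not apply; with the weight `w(s) = max (a - s) 1 ^ (α - 1)`, which
decays at `-∞` like the kernel itself, both Schur integrals are bounded: `∫ K(t, s) w(s) ds` for
`t ∈ (a, b)` because `(a - s)^(2α - 2)` is integrable at `-∞` exactly when `α < 1/2`, and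
`∫_a^b K(t, s) dt ≲ w(s)` by comparing `K(t, s)` with `(a - s)^(α - 1)` far to the left of `a`.
The weighted Schur test then bounds the operator on `L²`, and the finiteness of that `L²` norm
makes the integral defining `I₊^α φ (t)` absolutely convergent for almost every `t`.
-/

open Set ENNReal Function

section SchurTest

variable {X Y : Type*} [MeasurableSpace X] [MeasurableSpace Y] {μ : Measure X} {ν : Measure Y}

theorem lintegral_mul_sq_le_of_weight {k g w : Y → ℝ≥0∞} (hk : AEMeasurable k ν)
    (hg : AEMeasurable g ν) (hw : AEMeasurable w ν) (hw0 : ∀ y, w y ≠ 0) (hw_top : ∀ y, w y ≠ ∞) :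
    (∫⁻ y, k y * g y ∂ν) ^ 2 ≤ (∫⁻ y, k y * w y ∂ν) * ∫⁻ y, k y * (g y ^ 2 / w y) ∂ν := by
  set F₁ : Y → ℝ≥0∞ := fun y => (k y * w y) ^ (1 / 2 : ℝ)
  set F₂ : Y → ℝ≥0∞ := fun y => (k y * (g y ^ 2 / w y)) ^ (1 / 2 : ℝ)
  have hsq : ∀ x : ℝ≥0∞, (x ^ (1 / 2 : ℝ)) ^ (2 : ℝ) = x := fun x => by
    rw [← ENNReal.rpow_mul]; norm_num
  have hprod : ∀ y, k y * g y = F₁ y * F₂ y := fun y => by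
    have : k y * w y * (k y * (g y ^ 2 / w y)) = (k y * g y) ^ 2 := by
      rw [mul_mul_mul_comm, ENNReal.mul_div_cancel (hw0 y) (hw_top y)]; ring
    rw [← ENNReal.mul_rpow_of_nonneg _ _ (by norm_num), this, ← ENNReal.rpow_natCast,
      ← ENNReal.rpow_mul]
    norm_num
  have hF₁ : AEMeasurable F₁ ν := (hk.mul hw).pow_const _
  have hF₂ : AEMeasurable F₂ ν := (hk.mul ((hg.pow_const 2).div hw)).pow_const _
  calc (∫⁻ y, k y * g y ∂ν) ^ 2 = (∫⁻ y, (F₁ * F₂) y ∂ν) ^ (2 : ℝ) := by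
        rw [ENNReal.rpow_two]; simp only [Pi.mul_apply, hprod]
    _ ≤ ((∫⁻ y, F₁ y ^ (2 : ℝ) ∂ν) ^ (1 / 2 : ℝ) * (∫⁻ y, F₂ y ^ (2 : ℝ) ∂ν) ^ (1 / 2 : ℝ))
          ^ (2 : ℝ) := by
        gcongr; exact ENNReal.lintegral_mul_le_Lp_mul_Lq ν .two_two hF₁ hF₂
    _ = (∫⁻ y, k y * w y ∂ν) * ∫⁻ y, k y * (g y ^ 2 / w y) ∂ν := by
      rw [ENNReal.mul_rpow_of_nonneg _ _ (by norm_num), hsq, hsq]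
      simp only [F₁, F₂, hsq]

/-- Schur's test with weight `w`. -/
theorem lintegral_sq_lintegral_kernel_le [SFinite μ] [SFinite ν] {K : X → Y → ℝ≥0∞}
    (hK : Measurable (uncurry K)) {g w : Y → ℝ≥0∞} (hg : AEMeasurable g ν)
    (hw : AEMeasurable w ν) (hw0 : ∀ y, w y ≠ 0) (hw_top : ∀ y, w y ≠ ∞) {A B : ℝ≥0∞}
    (hA : ∀ᵐ x ∂μ, ∫⁻ y, K x y * w y ∂ν ≤ A) (hB : ∀ y, ∫⁻ x, K x y ∂μ ≤ B * w y) :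
    ∫⁻ x, (∫⁻ y, K x y * g y ∂ν) ^ 2 ∂μ ≤ A * B * ∫⁻ y, g y ^ 2 ∂ν := by
  have hgw : AEMeasurable (fun y => g y ^ 2 / w y) ν := (hg.pow_const 2).div hw
  calc ∫⁻ x, (∫⁻ y, K x y * g y ∂ν) ^ 2 ∂μ
      ≤ ∫⁻ x, A * ∫⁻ y, K x y * (g y ^ 2 / w y) ∂ν ∂μ := by
        refine lintegral_mono_ae (hA.mono fun x hx => ?_)
        refine (lintegral_mul_sq_le_of_weight (hK.of_uncurry_left).aemeasurable hg hw hw0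
          hw_top).trans ?_
        gcongr
    _ = A * ∫⁻ y, (∫⁻ x, K x y ∂μ) * (g y ^ 2 / w y) ∂ν := by
        have hKgw : AEMeasurable (uncurry fun x y => K x y * (g y ^ 2 / w y)) (μ.prod ν) :=
          hK.aemeasurable.mul hgw.comp_snd
        rw [lintegral_const_mul'' _ (by exact hKgw.lintegral_prod_right'),
          lintegral_lintegral_swap hKgw]
        simp only [lintegral_mul_const _ hK.of_uncurry_right]
    _ ≤ A * ∫⁻ y, B * w y * (g y ^ 2 / w y) ∂ν := by gcongr with y; exact hB y
    _ = A * B * ∫⁻ y, g y ^ 2 ∂ν := by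
        simp only [mul_assoc, ENNReal.mul_div_cancel (hw0 _) (hw_top _)]
        rw [lintegral_const_mul'' _ (hg.pow_const 2)]

theorem eLpNorm_lintegral_kernel_le [SFinite μ] [SFinite ν] {K : X → Y → ℝ≥0∞}
    (hK : Measurable (uncurry K)) {g w : Y → ℝ≥0∞} (hg : AEMeasurable g ν)
    (hw : AEMeasurable w ν) (hw0 : ∀ y, w y ≠ 0) (hw_top : ∀ y, w y ≠ ∞) {A B : ℝ≥0∞}
    (hA : ∀ᵐ x ∂μ, ∫⁻ y, K x y * w y ∂ν ≤ A) (hB : ∀ y, ∫⁻ x, K x y ∂μ ≤ B * w y) :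
    eLpNorm (fun x => ∫⁻ y, K x y * g y ∂ν) 2 μ ≤ (A * B) ^ (1 / 2 : ℝ) * eLpNorm g 2 ν := by
  simp only [eLpNorm_eq_lintegral_rpow_enorm_toReal two_ne_zero ofNat_ne_top, enorm_eq_self,
    toReal_ofNat, ENNReal.rpow_two]
  rw [← ENNReal.mul_rpow_of_nonneg _ _ (by norm_num)]
  gcongr
  exact lintegral_sq_lintegral_kernel_le hK hg hw hw0 hw_top hA hB

theorem ae_lt_top_of_eLpNorm_lt_top {f : X → ℝ≥0∞} (hf : AEMeasurable f μ) {p : ℝ≥0∞}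
    (hp0 : p ≠ 0) (hp_top : p ≠ ∞) (h : eLpNorm f p μ < ∞) : ∀ᵐ x ∂μ, f x < ∞ := by
  have hint := lintegral_rpow_enorm_lt_top_of_eLpNorm_lt_top hp0 hp_top h
  filter_upwards [ae_lt_top' (hf.pow_const p.toReal) hint.ne] with x hx
  exact (rpow_lt_top_iff_of_pos (toReal_pos hp0 hp_top)).1 hx

end SchurTest

theorem lintegral_Ioo_rpow {r c : ℝ} (hr : -1 < r) (hc : 0 ≤ c) :
    ∫⁻ u in Ioo 0 c, ENNReal.ofReal (u ^ r) = ENNReal.ofReal (c ^ (r + 1) / (r + 1)) := by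
  rw [← ofReal_integral_eq_lintegral_ofReal]
  · rw [← integral_Ioc_eq_integral_Ioo, ← intervalIntegral.integral_of_le hc,
      integral_rpow (Or.inl hr), Real.zero_rpow (by linarith), sub_zero]
  · exact (intervalIntegral.intervalIntegrable_rpow' hr).1.mono_set
      Ioo_subset_Ioc_self
  · filter_upwards [ae_restrict_mem measurableSet_Ioo] with u hu
    exact Real.rpow_nonneg hu.1.le r

theorem lintegral_Ioo_sub_rpow {r c : ℝ} (hr : -1 < r) (hc : 0 ≤ c) (x : ℝ) :
    ∫⁻ t in Ioo x (x + c), ENNReal.ofReal ((t - x) ^ r) =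
      ENNReal.ofReal (c ^ (r + 1) / (r + 1)) := by
  rw [(measurePreserving_sub_right volume x).setLIntegral_comp_emb
    (MeasurableEquiv.subRight x).measurableEmbedding (fun u => ENNReal.ofReal (u ^ r)),
    image_sub_const_Ioo, sub_self, add_sub_cancel_left, lintegral_Ioo_rpow hr hc]

theorem lintegral_Ioo_rsub_rpow {r c : ℝ} (hr : -1 < r) (hc : 0 ≤ c) (x : ℝ) :
    ∫⁻ s in Ioo (x - c) x, ENNReal.ofReal ((x - s) ^ r) =
      ENNReal.ofReal (c ^ (r + 1) / (r + 1)) := by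
  rw [(Measure.measurePreserving_sub_left volume x).setLIntegral_comp_emb
    (MeasurableEquiv.subLeft x).measurableEmbedding (fun u => ENNReal.ofReal (u ^ r)),
    image_const_sub_Ioo, sub_self, _root_.sub_sub_cancel, lintegral_Ioo_rpow hr hc]

theorem lintegral_Iio_rsub_rpow {r c : ℝ} (hr : r < -1) (hc : 0 < c) (x : ℝ) :
    ∫⁻ s in Iio (x - c), ENNReal.ofReal ((x - s) ^ r) =
      ENNReal.ofReal (-c ^ (r + 1) / (r + 1)) := by
  rw [(Measure.measurePreserving_sub_left volume x).setLIntegral_comp_emb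
    (MeasurableEquiv.subLeft x).measurableEmbedding (fun u => ENNReal.ofReal (u ^ r)),
    image_const_sub_Iio, _root_.sub_sub_cancel, ← ofReal_integral_eq_lintegral_ofReal
      (integrableOn_Ioi_rpow_of_lt hr hc), integral_Ioi_rpow_of_lt hr hc]
  filter_upwards [ae_restrict_mem measurableSet_Ioi] with u hu
  exact Real.rpow_nonneg (hc.trans hu).le r

-- The `if` keeps `Real.rpow` away from negative bases.
noncomputable def riemannLiouvilleKernel (α t s : ℝ) : ℝ≥0∞ :=
  if s < t then ENNReal.ofReal ((t - s) ^ (α - 1)) else 0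

noncomputable def schurWeight (a α s : ℝ) : ℝ≥0∞ :=
  ENNReal.ofReal (max (a - s) 1 ^ (α - 1))

section Kernel

variable {α a b : ℝ}

theorem measurable_riemannLiouvilleKernel :
    Measurable (uncurry (riemannLiouvilleKernel α)) :=
  Measurable.ite (measurableSet_lt measurable_snd measurable_fst) (by fun_prop) measurable_const

theorem riemannLiouvilleKernel_le {t s : ℝ} (hα : α ≤ 1) (hsa : s < a) (hat : a ≤ t) :
    riemannLiouvilleKernel α t s ≤ ENNReal.ofReal ((a - s) ^ (α - 1)) := by
  rw [riemannLiouvilleKernel, if_pos (hsa.trans_le hat)]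
  exact ofReal_le_ofReal (Real.rpow_le_rpow_of_nonpos (by linarith) (by linarith) (by linarith))

theorem measurable_schurWeight : Measurable (schurWeight a α) := by
  unfold schurWeight; fun_prop

theorem schurWeight_ne_zero (s : ℝ) : schurWeight a α s ≠ 0 := by
  simp only [schurWeight, ne_eq, ofReal_eq_zero, not_le]
  exact Real.rpow_pos_of_pos (by positivity) _

theorem schurWeight_ne_top (s : ℝ) : schurWeight a α s ≠ ∞ := ofReal_ne_top

theorem schurWeight_le_one (hα : α ≤ 1) (s : ℝ) : schurWeight a α s ≤ 1 :=
  ofReal_le_one.2 (Real.rpow_le_one_of_one_le_of_nonpos (le_max_right _ _) (by linarith))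

theorem schurWeight_of_le {s : ℝ} (h : s ≤ a - 1) :
    schurWeight a α s = ENNReal.ofReal ((a - s) ^ (α - 1)) := by
  rw [schurWeight, max_eq_left (by linarith)]

theorem schurWeight_of_ge {s : ℝ} (h : a - 1 ≤ s) : schurWeight a α s = 1 := by
  rw [schurWeight, max_eq_right (by linarith), Real.one_rpow, ofReal_one]

theorem lintegral_riemannLiouvilleKernel_mul_schurWeight_le (hα : α ∈ Ioo 0 (1 / 2)) {t : ℝ}
    (ht : t ∈ Ico a b) :
    ∫⁻ s, riemannLiouvilleKernel α t s * schurWeight a α s ≤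
      ENNReal.ofReal (1 / (1 - 2 * α) + (b - a + 1) ^ α / α) := by
  obtain ⟨hα0, hα2⟩ := hα
  set R := b - a + 1
  have hR : 0 < R := by linarith [ht.1, ht.2]
  have hsupp : support (fun s => riemannLiouvilleKernel α t s * schurWeight a α s) ⊆
      Iio (a - 1) ∪ Ioo (t - R) t := by
    intro s hs
    rw [mem_support] at hs
    by_contra hs'
    simp only [mem_union, mem_Iio, mem_Ioo, not_or, not_and, not_lt] at hs'
    refine hs ?_
    rw [riemannLiouvilleKernel, if_neg (not_lt.2 (hs'.2 (by linarith [ht.2]))), zero_mul]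
  have hfar : ∫⁻ s in Iio (a - 1), riemannLiouvilleKernel α t s * schurWeight a α s ≤
      ENNReal.ofReal (1 / (1 - 2 * α)) := by
    calc _ ≤ ∫⁻ s in Iio (a - 1), ENNReal.ofReal ((a - s) ^ (2 * α - 2)) := by
          refine setLIntegral_mono' measurableSet_Iio fun s (hs : s < a - 1) => ?_
          have has : 0 < a - s := by linarith
          rw [schurWeight_of_le hs.le, show 2 * α - 2 = (α - 1) + (α - 1) by ring,
            Real.rpow_add has, ofReal_mul (Real.rpow_nonneg has.le _)]
          gcongr
          exact riemannLiouvilleKernel_le (by linarith) (by linarith) ht.1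
      _ = ENNReal.ofReal (1 / (1 - 2 * α)) := by
          rw [lintegral_Iio_rsub_rpow (by linarith) one_pos, Real.one_rpow]
          rw [show 2 * α - 2 + 1 = -(1 - 2 * α) by ring, neg_div_neg_eq]
  have hnear : ∫⁻ s in Ioo (t - R) t, riemannLiouvilleKernel α t s * schurWeight a α s ≤
      ENNReal.ofReal (R ^ α / α) := by
    calc _ ≤ ∫⁻ s in Ioo (t - R) t, ENNReal.ofReal ((t - s) ^ (α - 1)) := by
          refine setLIntegral_mono' measurableSet_Ioo fun s hs => ?_
          rw [riemannLiouvilleKernel, if_pos hs.2]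
          exact mul_le_of_le_one_right' (schurWeight_le_one (by linarith) s)
      _ = ENNReal.ofReal (R ^ α / α) := by
          rw [lintegral_Ioo_rsub_rpow (by linarith) hR.le, sub_add_cancel]
  calc _ = ∫⁻ s in Iio (a - 1) ∪ Ioo (t - R) t,
        riemannLiouvilleKernel α t s * schurWeight a α s :=
          (setLIntegral_eq_of_support_subset hsupp).symm
    _ ≤ _ := lintegral_union_le _ _ _
    _ ≤ _ := add_le_add hfar hnear
    _ = _ := (ofReal_add (one_div_pos.2 (by linarith)).le (by positivity)).symm

theorem setLIntegral_riemannLiouvilleKernel_le (hα : α ∈ Ioo 0 1) (hab : a ≤ b) (s : ℝ) :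
    ∫⁻ t in Ioo a b, riemannLiouvilleKernel α t s ≤
      ENNReal.ofReal (b - a + (b - a + 1) ^ α / α) * schurWeight a α s := by
  obtain ⟨hα0, hα1⟩ := hα
  set R := b - a + 1
  have hR : 0 < R := by linarith
  rcases le_or_gt s (a - 1) with hs | hs
  · calc _ ≤ ∫⁻ _ in Ioo a b, schurWeight a α s := by
          refine setLIntegral_mono' measurableSet_Ioo fun t ht => ?_
          rw [schurWeight_of_le hs]
          exact riemannLiouvilleKernel_le hα1.le (by linarith) ht.1.le
      _ = ENNReal.ofReal (b - a) * schurWeight a α s := by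
          rw [setLIntegral_const, Real.volume_Ioo, mul_comm]
      _ ≤ _ := by gcongr; exact le_add_of_nonneg_right (by positivity)
  · calc _ ≤ ∫⁻ t in Ioo a b, (Ioo s (s + R)).indicator
            (fun t => ENNReal.ofReal ((t - s) ^ (α - 1))) t := by
          refine setLIntegral_mono' measurableSet_Ioo fun t ht => ?_
          rw [riemannLiouvilleKernel]
          split_ifs with hst
          · rw [indicator_of_mem (show t ∈ Ioo s (s + R) from ⟨hst, by linarith [ht.2]⟩)]
          · exact zero_le
      _ ≤ ∫⁻ t, (Ioo s (s + R)).indicator (fun t => ENNReal.ofReal ((t - s) ^ (α - 1))) t :=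
          setLIntegral_le_lintegral _ _
      _ = ∫⁻ t in Ioo s (s + R), ENNReal.ofReal ((t - s) ^ (α - 1)) :=
          lintegral_indicator measurableSet_Ioo _
      _ = ENNReal.ofReal (R ^ α / α) := by
          rw [lintegral_Ioo_sub_rpow (by linarith) hR.le, sub_add_cancel]
      _ ≤ _ := by
          rw [schurWeight_of_ge hs.le, mul_one]
          exact ofReal_le_ofReal (le_add_of_nonneg_left (by linarith))

theorem exists_eLpNorm_lintegral_riemannLiouvilleKernel_le (hα : α ∈ Ioo 0 (1 / 2))
    (hab : a ≤ b) :
    ∃ C > 0, ∀ g : ℝ → ℝ≥0∞, AEMeasurable g volume →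
      eLpNorm (fun t => ∫⁻ s, riemannLiouvilleKernel α t s * g s) 2 (volume.restrict (Ioo a b))
        ≤ ENNReal.ofReal C * eLpNorm g 2 volume := by
  obtain ⟨hα0, hα2⟩ := hα
  set A := 1 / (1 - 2 * α) + (b - a + 1) ^ α / α
  set B := b - a + (b - a + 1) ^ α / α
  have hA : 0 < A := add_pos (one_div_pos.2 (by linarith)) (by positivity)
  have hB : 0 < B := add_pos_of_nonneg_of_pos (by linarith) (by positivity)
  refine ⟨√(A * B), by positivity, fun g hg => ?_⟩
  have hSchur := eLpNorm_lintegral_kernel_le measurable_riemannLiouvilleKernel hg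
    measurable_schurWeight.aemeasurable schurWeight_ne_zero schurWeight_ne_top
    ((ae_restrict_mem measurableSet_Ioo).mono fun t ht =>
      lintegral_riemannLiouvilleKernel_mul_schurWeight_le ⟨hα0, hα2⟩ (Ioo_subset_Ico_self ht))
    (setLIntegral_riemannLiouvilleKernel_le ⟨hα0, by linarith⟩ hab)
  rwa [← ofReal_mul hA.le, ofReal_rpow_of_nonneg (by positivity) (by norm_num),
    ← Real.sqrt_eq_rpow] at hSchur

end Kernel

section Iplus

variable {α : ℝ} {φ ψ : ℝ → ℝ}

theorem setLIntegral_enorm_eq_lintegral_riemannLiouvilleKernel (t : ℝ) :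
    ∫⁻ s in Iio t, ‖(t - s) ^ (α - 1) * φ s‖ₑ = ∫⁻ s, riemannLiouvilleKernel α t s * ‖φ s‖ₑ := by
  rw [← lintegral_indicator measurableSet_Iio]
  congr 1 with s
  simp only [indicator_apply, mem_Iio, riemannLiouvilleKernel]
  split_ifs with hs
  · rw [enorm_mul, Real.enorm_of_nonneg (Real.rpow_nonneg (sub_nonneg.2 hs.le) _)]
  · rw [zero_mul]

theorem enorm_Iplus_le (t : ℝ) :
    ‖Iplus α φ t‖ₑ ≤ ‖1 / Real.Gamma α‖ₑ * ∫⁻ s, riemannLiouvilleKernel α t s * ‖φ s‖ₑ := by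
  rw [Iplus, enorm_mul, ← setLIntegral_enorm_eq_lintegral_riemannLiouvilleKernel]
  gcongr
  exact enorm_integral_le_lintegral_enorm _

theorem integrableOn_of_lintegral_riemannLiouvilleKernel_lt_top
    (hφ : AEStronglyMeasurable φ volume) {t : ℝ}
    (h : ∫⁻ s, riemannLiouvilleKernel α t s * ‖φ s‖ₑ < ∞) :
    IntegrableOn (fun s => (t - s) ^ (α - 1) * φ s) (Iio t) := by
  refine ⟨(Measurable.aestronglyMeasurable (by fun_prop)).mul hφ.restrict, ?_⟩
  rwa [hasFiniteIntegral_iff_enorm, setLIntegral_enorm_eq_lintegral_riemannLiouvilleKernel]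

theorem Iplus_congr_ae (h : φ =ᵐ[volume] ψ) : Iplus α φ = Iplus α ψ := by
  ext t
  rw [Iplus, Iplus, integral_congr_ae (h.restrict.mono fun s hs => by rw [hs])]

theorem stronglyMeasurable_Iplus (hφ : AEStronglyMeasurable φ volume) :
    StronglyMeasurable (Iplus α φ) := by
  rw [Iplus_congr_ae hφ.ae_eq_mk]
  have hker : StronglyMeasurable (uncurry fun t s =>
      (Iio t).indicator (fun s => (t - s) ^ (α - 1) * hφ.mk φ s) s) := by
    refine (Measurable.ite (measurableSet_lt measurable_snd measurable_fst) ?_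
      measurable_const).stronglyMeasurable
    exact (by fun_prop : Measurable fun p : ℝ × ℝ => (p.1 - p.2) ^ (α - 1)).mul
      (hφ.stronglyMeasurable_mk.measurable.comp measurable_snd)
  have hrepr : Iplus α (hφ.mk φ) = fun t => 1 / Real.Gamma α *
      ∫ s, (Iio t).indicator (fun s => (t - s) ^ (α - 1) * hφ.mk φ s) s := by
    ext t
    rw [Iplus, integral_indicator measurableSet_Iio]
  rw [hrepr]
  exact hker.integral_prod_right'.const_mul _

theorem eLpNorm_Iplus_le (p : ℝ≥0∞) (μ : Measure ℝ) :
    eLpNorm (Iplus α φ) p μ ≤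
      ‖1 / Real.Gamma α‖ₑ * eLpNorm (fun t => ∫⁻ s, riemannLiouvilleKernel α t s * ‖φ s‖ₑ) p μ :=
  eLpNorm_le_nnreal_smul_eLpNorm_of_ae_le_mul' (ae_of_all _ enorm_Iplus_le) p

end Iplus

theorem Iplus_L2_bound (α : ℝ) (hα : α ∈ Set.Ioo (0:ℝ) (1/2)) (a b : ℝ) (hab : a < b) :
    ∃ C > 0, ∀ φ : ℝ → ℝ, MemLp φ 2 volume →
      (∀ᵐ t ∂(volume.restrict (Set.Ioo a b)),
        IntegrableOn (fun s => (t - s) ^ (α - 1) * φ s) (Set.Iio t) volume) ∧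
      MemLp (Iplus α φ) 2 (volume.restrict (Set.Ioo a b)) ∧
      eLpNorm (Iplus α φ) 2 (volume.restrict (Set.Ioo a b))
        ≤ ENNReal.ofReal C * eLpNorm φ 2 volume := by
  obtain ⟨C, hC, hL2⟩ := exists_eLpNorm_lintegral_riemannLiouvilleKernel_le hα hab.le
  have hΓ : 0 < Real.Gamma α := Real.Gamma_pos_of_pos hα.1
  refine ⟨C / Real.Gamma α, by positivity, fun φ hφ => ?_⟩
  set μ := volume.restrict (Ioo a b)
  set F : ℝ → ℝ≥0∞ := fun t => ∫⁻ s, riemannLiouvilleKernel α t s * ‖φ s‖ₑ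
  have hF : eLpNorm F 2 μ ≤ ENNReal.ofReal C * eLpNorm φ 2 volume := by
    simpa only [eLpNorm_enorm] using hL2 _ hφ.1.enorm
  have hF_lt_top : ∀ᵐ t ∂μ, F t < ∞ :=
    ae_lt_top_of_eLpNorm_lt_top
      (measurable_riemannLiouvilleKernel.aemeasurable.mul hφ.1.enorm.comp_snd).lintegral_prod_right'
      two_ne_zero ofNat_ne_top (hF.trans_lt (mul_lt_top ofReal_lt_top hφ.2))
  have hIplus : eLpNorm (Iplus α φ) 2 μ ≤ ENNReal.ofReal (C / Real.Gamma α) * eLpNorm φ 2 volume :=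
    calc _ ≤ ‖1 / Real.Gamma α‖ₑ * eLpNorm F 2 μ := eLpNorm_Iplus_le 2 μ
      _ ≤ ENNReal.ofReal (1 / Real.Gamma α) * (ENNReal.ofReal C * eLpNorm φ 2 volume) := by
          rw [Real.enorm_of_nonneg (by positivity)]
          gcongr
      _ = _ := by rw [← mul_assoc, ← ofReal_mul (by positivity), one_div_mul_eq_div]
  exact ⟨hF_lt_top.mono fun t => integrableOn_of_lintegral_riemannLiouvilleKernel_lt_top hφ.1,
    ⟨(stronglyMeasurable_Iplus hφ.1).aestronglyMeasurable,
      hIplus.trans_lt (mul_lt_top ofReal_lt_top hφ.2)⟩, hIplus⟩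
end

section
/- Let α ∈ (0, 1/2), let a < b be real numbers, let f ∈ L²((a, b)) and g ∈ L²(ℝ). Then ∫_a^b ∫_ℝ |f(t)| (t-s)₊^{α-1} |g(s)| ds dt < ∞, and ∫_a^b f(t) I₊^α(g)(t) dt = ∫_ℝ I₋^α(1_{(a,b)} f)(s) g(s) ds. -/
/-!
Split the kernel `(t - s)₊^{α-1}` at `t - s = 1`. The part near the diagonal is integrable, so the
Schur test bounds its double integral by `‖f‖₂ ‖g‖₂`. The tail is square integrable precisely
because `α < 1/2`, so Cauchy–Schwarz in `s` bounds the inner integral uniformly in `t`, and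
`f ∈ L¹(a, b)` because the interval is bounded. Absolute convergence then lets Fubini exchange the
two integrations, which turns `I₊^α` into `I₋^α`.
-/

open MeasureTheory

/-- Right-sided fractional integral of order `α` on the real line:
`I₋^α(φ)(s) = (1/Γ(α)) ∫_s^∞ (r-s)^{α-1} φ(r) dr`. -/
noncomputable def Iminus (α : ℝ) (φ : ℝ → ℝ) (s : ℝ) : ℝ :=
  (1 / Real.Gamma α) * ∫ r in Set.Ioi s, (r - s) ^ (α - 1) * φ r

open Set Function ENNReal

section KernelBounds

variable {X Y : Type*} [MeasurableSpace X] [MeasurableSpace Y] {μ : Measure X} {ν : Measure Y}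

theorem lintegral_lintegral_add [SFinite ν] {H₁ H₂ : X → Y → ℝ≥0∞}
    (h₁ : AEMeasurable (uncurry H₁) (μ.prod ν)) (h₂ : AEMeasurable (uncurry H₂) (μ.prod ν)) :
    ∫⁻ x, ∫⁻ y, (H₁ x y + H₂ x y) ∂ν ∂μ
      = ∫⁻ x, ∫⁻ y, H₁ x y ∂ν ∂μ + ∫⁻ x, ∫⁻ y, H₂ x y ∂ν ∂μ := by
  rw [lintegral_lintegral (h₁.add h₂), lintegral_lintegral h₁, lintegral_lintegral h₂]
  exact lintegral_add_left' h₁ _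

theorem mul_rpow_half_rpow_two (a b : ℝ≥0∞) :
    (a * b ^ (1 / 2 : ℝ)) ^ (2 : ℝ) = a ^ (2 : ℝ) * b := by
  rw [mul_rpow_of_nonneg _ _ zero_le_two, ← rpow_mul]
  norm_num

theorem mul_mul_eq_mul_rpow_half_mul_rpow_half_mul (a b c : ℝ≥0∞) :
    a * b * c = (a * b ^ (1 / 2 : ℝ)) * (b ^ (1 / 2 : ℝ) * c) := by
  have hsqrt : b ^ (1 / 2 : ℝ) * b ^ (1 / 2 : ℝ) = b := by
    rw [← rpow_add_of_nonneg _ _ (by norm_num) (by norm_num)]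
    norm_num
  conv_lhs => rw [← hsqrt]
  ring

/-- The Schur test on `L²`. -/
theorem lintegral_lintegral_mul_kernel_mul_le_of_schur [SFinite μ] [SFinite ν]
    {F : X → ℝ≥0∞} {G : Y → ℝ≥0∞} {K : X → Y → ℝ≥0∞}
    (hF : AEMeasurable F μ) (hG : AEMeasurable G ν) (hK : Measurable (uncurry K))
    {A B : ℝ≥0∞} (hA : ∀ x, ∫⁻ y, K x y ∂ν ≤ A) (hB : ∀ y, ∫⁻ x, K x y ∂μ ≤ B) :
    ∫⁻ x, ∫⁻ y, F x * K x y * G y ∂ν ∂μ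
      ≤ (A * ∫⁻ x, F x ^ (2 : ℝ) ∂μ) ^ (1 / 2 : ℝ)
        * (B * ∫⁻ y, G y ^ (2 : ℝ) ∂ν) ^ (1 / 2 : ℝ) := by
  have hF' : AEMeasurable (fun z : X × Y => F z.1) (μ.prod ν) := hF.comp_fst
  have hG' : AEMeasurable (fun z : X × Y => G z.2) (μ.prod ν) := hG.comp_snd
  have hK' : AEMeasurable (fun z : X × Y => K z.1 z.2 ^ (1 / 2 : ℝ)) (μ.prod ν) :=
    (hK.pow_const _).aemeasurable
  have hleft : ∫⁻ z, (F z.1 * K z.1 z.2 ^ (1 / 2 : ℝ)) ^ (2 : ℝ) ∂μ.prod ν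
      ≤ A * ∫⁻ x, F x ^ (2 : ℝ) ∂μ := by
    calc ∫⁻ z, (F z.1 * K z.1 z.2 ^ (1 / 2 : ℝ)) ^ (2 : ℝ) ∂μ.prod ν
        = ∫⁻ x, F x ^ (2 : ℝ) * ∫⁻ y, K x y ∂ν ∂μ := by
          simp_rw [mul_rpow_half_rpow_two]
          rw [lintegral_prod (fun z => F z.1 ^ (2 : ℝ) * K z.1 z.2)
            ((hF'.pow_const _).mul hK.aemeasurable)]
          refine lintegral_congr fun x => ?_
          dsimp only
          exact lintegral_const_mul _ hK.of_uncurry_left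
      _ ≤ ∫⁻ x, F x ^ (2 : ℝ) * A ∂μ := by gcongr with x; exact hA x
      _ = A * ∫⁻ x, F x ^ (2 : ℝ) ∂μ := by
          rw [lintegral_mul_const'' _ (hF.pow_const _), mul_comm]
  have hright : ∫⁻ z, (K z.1 z.2 ^ (1 / 2 : ℝ) * G z.2) ^ (2 : ℝ) ∂μ.prod ν
      ≤ B * ∫⁻ y, G y ^ (2 : ℝ) ∂ν := by
    calc ∫⁻ z, (K z.1 z.2 ^ (1 / 2 : ℝ) * G z.2) ^ (2 : ℝ) ∂μ.prod ν
        = ∫⁻ y, (∫⁻ x, K x y ∂μ) * G y ^ (2 : ℝ) ∂ν := by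
          simp_rw [mul_comm _ (G _), mul_rpow_half_rpow_two]
          rw [lintegral_prod_symm (fun z => G z.2 ^ (2 : ℝ) * K z.1 z.2)
            ((hG'.pow_const _).mul hK.aemeasurable)]
          refine lintegral_congr fun y => ?_
          dsimp only
          rw [lintegral_const_mul _ hK.of_uncurry_right, mul_comm]
      _ ≤ ∫⁻ y, B * G y ^ (2 : ℝ) ∂ν := by gcongr with y; exact hB y
      _ = B * ∫⁻ y, G y ^ (2 : ℝ) ∂ν := lintegral_const_mul'' _ (hG.pow_const _)
  calc ∫⁻ x, ∫⁻ y, F x * K x y * G y ∂ν ∂μ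
      = ∫⁻ z, (F z.1 * K z.1 z.2 ^ (1 / 2 : ℝ)) * (K z.1 z.2 ^ (1 / 2 : ℝ) * G z.2)
          ∂μ.prod ν := by
        rw [lintegral_lintegral ((hF'.mul hK.aemeasurable).mul hG')]
        exact lintegral_congr fun z => mul_mul_eq_mul_rpow_half_mul_rpow_half_mul _ _ _
    _ ≤ (∫⁻ z, (F z.1 * K z.1 z.2 ^ (1 / 2 : ℝ)) ^ (2 : ℝ) ∂μ.prod ν) ^ (1 / 2 : ℝ) *
        (∫⁻ z, (K z.1 z.2 ^ (1 / 2 : ℝ) * G z.2) ^ (2 : ℝ) ∂μ.prod ν) ^ (1 / 2 : ℝ) :=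
        lintegral_mul_le_Lp_mul_Lq _ Real.HolderConjugate.two_two (hF'.mul hK') (hK'.mul hG')
    _ ≤ _ := by gcongr

theorem lintegral_lintegral_mul_kernel_mul_le_of_sq
    {F : X → ℝ≥0∞} {G : Y → ℝ≥0∞} {K : X → Y → ℝ≥0∞}
    (hF : AEMeasurable F μ) (hG : AEMeasurable G ν) (hK : ∀ x, Measurable (K x))
    {C : ℝ≥0∞} (hC : ∀ x, ∫⁻ y, K x y ^ (2 : ℝ) ∂ν ≤ C) :
    ∫⁻ x, ∫⁻ y, F x * K x y * G y ∂ν ∂μ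
      ≤ (∫⁻ x, F x ∂μ) * (C ^ (1 / 2 : ℝ) * (∫⁻ y, G y ^ (2 : ℝ) ∂ν) ^ (1 / 2 : ℝ)) := by
  have hinner : ∀ x, ∫⁻ y, K x y * G y ∂ν
      ≤ C ^ (1 / 2 : ℝ) * (∫⁻ y, G y ^ (2 : ℝ) ∂ν) ^ (1 / 2 : ℝ) := fun x =>
    (lintegral_mul_le_Lp_mul_Lq _ Real.HolderConjugate.two_two (hK x).aemeasurable hG).trans
      (by gcongr; exact hC x)
  calc ∫⁻ x, ∫⁻ y, F x * K x y * G y ∂ν ∂μ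
      = ∫⁻ x, F x * ∫⁻ y, K x y * G y ∂ν ∂μ := by
        refine lintegral_congr fun x => ?_
        simp_rw [mul_assoc]
        exact lintegral_const_mul'' _ ((hK x).aemeasurable.mul hG)
    _ ≤ ∫⁻ x, F x * (C ^ (1 / 2 : ℝ) * (∫⁻ y, G y ^ (2 : ℝ) ∂ν) ^ (1 / 2 : ℝ)) ∂μ := by
        gcongr with x; exact hinner x
    _ = _ := lintegral_mul_const'' _ hF

end KernelBounds

theorem pospow_nonneg (x γ : ℝ) : 0 ≤ pospow x γ := by
  unfold pospow
  split_ifs with h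
  exacts [Real.rpow_nonneg h.le γ, le_rfl]

theorem pospow_eq_indicator (x γ : ℝ) : pospow x γ = (Ioi 0).indicator (· ^ γ) x := rfl

theorem measurable_pospow (γ : ℝ) : Measurable fun x : ℝ => pospow x γ :=
  (measurable_id.pow_const γ).indicator measurableSet_Ioi

theorem ofReal_pospow_eq_indicator_add_indicator (x γ : ℝ) :
    ENNReal.ofReal (pospow x γ)
      = (Ioc 0 1).indicator (fun u => ENNReal.ofReal (u ^ γ)) x
        + (Ioi 1).indicator (fun u => ENNReal.ofReal (u ^ γ)) x := by
  rw [pospow_eq_indicator, ← comp_apply (f := ENNReal.ofReal),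
    ← indicator_comp_of_zero ENNReal.ofReal_zero,
    ← Ioc_union_Ioi_eq_Ioi zero_le_one, indicator_union_of_disjoint Ioc_disjoint_Ioi_same]
  rfl

theorem lintegral_indicator_Ioc_rpow_lt_top {γ : ℝ} (hγ : -1 < γ) :
    ∫⁻ u, (Ioc 0 1).indicator (fun u => ENNReal.ofReal (u ^ γ)) u < ⊤ := by
  rw [lintegral_indicator measurableSet_Ioc]
  exact (intervalIntegral.intervalIntegrable_rpow' (a := 0) (b := 1) hγ).1.lintegral_lt_top

theorem lintegral_indicator_Ioi_rpow_sq_lt_top {γ : ℝ} (hγ : γ < -1 / 2) :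
    ∫⁻ u, (Ioi 1).indicator (fun u => ENNReal.ofReal (u ^ γ)) u ^ (2 : ℝ) < ⊤ := by
  have hsq : ∀ u, (Ioi 1).indicator (fun u => ENNReal.ofReal (u ^ γ)) u ^ (2 : ℝ)
      = (Ioi 1).indicator (fun u => ENNReal.ofReal (u ^ (γ * 2))) u := by
    intro u
    by_cases hu : u ∈ Ioi (1 : ℝ)
    · have hu0 : (0 : ℝ) ≤ u := zero_le_one.trans (le_of_lt hu)
      rw [indicator_of_mem hu, indicator_of_mem hu,
        ofReal_rpow_of_nonneg (Real.rpow_nonneg hu0 γ) zero_le_two, ← Real.rpow_mul hu0]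
    · simp [indicator_of_notMem hu]
  simp_rw [hsq]
  rw [lintegral_indicator measurableSet_Ioi]
  exact (integrableOn_Ioi_rpow_of_lt (by linarith) zero_lt_one).lintegral_lt_top

section ConvolutionKernel

variable {S : Set ℝ} {F G k : ℝ → ℝ≥0∞}

theorem setLIntegral_lintegral_mul_sub_mul_lt_top_of_lintegral_lt_top
    (hF : AEMeasurable F (volume.restrict S)) (hG : AEMeasurable G) (hk : Measurable k)
    (hk1 : ∫⁻ u, k u < ⊤) (hF2 : ∫⁻ t in S, F t ^ (2 : ℝ) < ⊤) (hG2 : ∫⁻ s, G s ^ (2 : ℝ) < ⊤) :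
    ∫⁻ t in S, ∫⁻ s, F t * k (t - s) * G s < ⊤ := by
  have hK : Measurable (uncurry fun t s : ℝ => k (t - s)) :=
    hk.comp (measurable_fst.sub measurable_snd)
  refine (lintegral_lintegral_mul_kernel_mul_le_of_schur hF hG hK
    (fun t => (lintegral_sub_left_eq_self k t).le)
    (fun s => (setLIntegral_le_lintegral S _).trans
      (lintegral_sub_right_eq_self k s).le)).trans_lt ?_
  exact mul_lt_top (rpow_lt_top_of_nonneg (by norm_num) (mul_lt_top hk1 hF2).ne)
    (rpow_lt_top_of_nonneg (by norm_num) (mul_lt_top hk1 hG2).ne)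

theorem setLIntegral_lintegral_mul_sub_mul_lt_top_of_lintegral_sq_lt_top
    (hF : AEMeasurable F (volume.restrict S)) (hG : AEMeasurable G) (hk : Measurable k)
    (hk2 : ∫⁻ u, k u ^ (2 : ℝ) < ⊤) (hF1 : ∫⁻ t in S, F t < ⊤) (hG2 : ∫⁻ s, G s ^ (2 : ℝ) < ⊤) :
    ∫⁻ t in S, ∫⁻ s, F t * k (t - s) * G s < ⊤ := by
  refine (lintegral_lintegral_mul_kernel_mul_le_of_sq hF hG
    (fun t => hk.comp (measurable_const.sub measurable_id))
    (fun t => (lintegral_sub_left_eq_self (fun u => k u ^ (2 : ℝ)) t).le)).trans_lt ?_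
  exact mul_lt_top hF1 (mul_lt_top (rpow_lt_top_of_nonneg (by norm_num) hk2.ne)
    (rpow_lt_top_of_nonneg (by norm_num) hG2.ne))

end ConvolutionKernel

theorem setLIntegral_lintegral_enorm_mul_pospow_mul_enorm_lt_top {α : ℝ}
    (hα : α ∈ Ioo 0 (1 / 2)) {S : Set ℝ} (hS : volume S ≠ ⊤) {f g : ℝ → ℝ}
    (hf : MemLp f 2 (volume.restrict S)) (hg : MemLp g 2) :
    ∫⁻ t in S, ∫⁻ s, ‖f t‖ₑ * ENNReal.ofReal (pospow (t - s) (α - 1)) * ‖g s‖ₑ < ⊤ := by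
  have : IsFiniteMeasure (volume.restrict S) := isFiniteMeasure_restrict.2 hS
  set kN := (Ioc 0 1).indicator fun u : ℝ => ENNReal.ofReal (u ^ (α - 1))
  set kF := (Ioi 1).indicator fun u : ℝ => ENNReal.ofReal (u ^ (α - 1))
  have hkN : Measurable kN :=
    (measurable_id.pow_const _).ennreal_ofReal.indicator measurableSet_Ioc
  have hkF : Measurable kF :=
    (measurable_id.pow_const _).ennreal_ofReal.indicator measurableSet_Ioi
  have hF := hf.aestronglyMeasurable.enorm
  have hG := hg.aestronglyMeasurable.enorm
  have hF2 : ∫⁻ t in S, ‖f t‖ₑ ^ (2 : ℝ) < ⊤ := by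
    simpa using lintegral_rpow_enorm_lt_top_of_eLpNorm_lt_top two_ne_zero ofNat_ne_top hf.2
  have hG2 : ∫⁻ s, ‖g s‖ₑ ^ (2 : ℝ) < ⊤ := by
    simpa using lintegral_rpow_enorm_lt_top_of_eLpNorm_lt_top two_ne_zero ofNat_ne_top hg.2
  have hprod : ∀ {k : ℝ → ℝ≥0∞}, Measurable k → AEMeasurable
      (uncurry fun t s => ‖f t‖ₑ * k (t - s) * ‖g s‖ₑ) ((volume.restrict S).prod volume) :=
    fun hk => (hF.comp_fst.mul (hk.comp (measurable_fst.sub measurable_snd)).aemeasurable).mul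
      hG.comp_snd
  calc ∫⁻ t in S, ∫⁻ s, ‖f t‖ₑ * ENNReal.ofReal (pospow (t - s) (α - 1)) * ‖g s‖ₑ
      = ∫⁻ t in S, ∫⁻ s, (‖f t‖ₑ * kN (t - s) * ‖g s‖ₑ + ‖f t‖ₑ * kF (t - s) * ‖g s‖ₑ) := by
        simp_rw [ofReal_pospow_eq_indicator_add_indicator, mul_add, add_mul]
        rfl
    _ = (∫⁻ t in S, ∫⁻ s, ‖f t‖ₑ * kN (t - s) * ‖g s‖ₑ)
          + ∫⁻ t in S, ∫⁻ s, ‖f t‖ₑ * kF (t - s) * ‖g s‖ₑ :=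
        lintegral_lintegral_add (hprod hkN) (hprod hkF)
    _ < ⊤ := add_lt_top.2
        ⟨setLIntegral_lintegral_mul_sub_mul_lt_top_of_lintegral_lt_top hF hG hkN
          (lintegral_indicator_Ioc_rpow_lt_top (by linarith [hα.1])) hF2 hG2,
        setLIntegral_lintegral_mul_sub_mul_lt_top_of_lintegral_sq_lt_top hF hG hkF
          (lintegral_indicator_Ioi_rpow_sq_lt_top (by linarith [hα.2]))
          (hf.integrable one_le_two).2 hG2⟩

section Fubini

variable {X Y : Type*} [MeasurableSpace X] [MeasurableSpace Y] {μ : Measure X} {ν : Measure Y}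
  {f : X → ℝ} {g : Y → ℝ} {K : X → Y → ℝ}

theorem integrable_prod_mul_kernel_mul [SFinite ν] (hf : AEStronglyMeasurable f μ)
    (hg : AEStronglyMeasurable g ν) (hK : AEStronglyMeasurable (uncurry K) (μ.prod ν))
    (hfin : ∫⁻ x, ∫⁻ y, ‖f x‖ₑ * ‖K x y‖ₑ * ‖g y‖ₑ ∂ν ∂μ < ⊤) :
    Integrable (fun z : X × Y => f z.1 * K z.1 z.2 * g z.2) (μ.prod ν) := by
  refine ⟨(hf.comp_fst.mul hK).mul hg.comp_snd, ?_⟩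
  simp only [HasFiniteIntegral, enorm_mul]
  rwa [lintegral_prod (fun z => ‖f z.1‖ₑ * ‖K z.1 z.2‖ₑ * ‖g z.2‖ₑ)
    ((hf.comp_fst.enorm.mul hK.enorm).mul hg.comp_snd.enorm)]

theorem integral_mul_integral_kernel_swap [SFinite μ] [SFinite ν]
    (h : Integrable (fun z : X × Y => f z.1 * K z.1 z.2 * g z.2) (μ.prod ν)) :
    ∫ x, f x * ∫ y, K x y * g y ∂ν ∂μ = ∫ y, (∫ x, K x y * f x ∂μ) * g y ∂ν := by
  calc ∫ x, f x * ∫ y, K x y * g y ∂ν ∂μ = ∫ x, ∫ y, f x * K x y * g y ∂ν ∂μ := by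
        simp_rw [mul_assoc, integral_const_mul]
    _ = ∫ y, ∫ x, f x * K x y * g y ∂μ ∂ν := integral_integral_swap h
    _ = ∫ y, (∫ x, K x y * f x ∂μ) * g y ∂ν := by
        simp_rw [← integral_mul_const, mul_comm (f _)]

end Fubini

theorem Iplus_eq_integral_pospow (α : ℝ) (φ : ℝ → ℝ) (t : ℝ) :
    Iplus α φ t = 1 / Real.Gamma α * ∫ s, pospow (t - s) (α - 1) * φ s := by
  rw [Iplus, ← integral_indicator measurableSet_Iio]
  congr with s
  simp only [indicator, mem_Iio, pospow, sub_pos, ite_mul, zero_mul]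

theorem Iminus_indicator_eq_setIntegral_pospow (α : ℝ) {S : Set ℝ} (hS : MeasurableSet S)
    (φ : ℝ → ℝ) (s : ℝ) :
    Iminus α (S.indicator φ) s = 1 / Real.Gamma α * ∫ r in S, pospow (r - s) (α - 1) * φ r := by
  rw [Iminus, ← integral_indicator measurableSet_Ioi, ← integral_indicator hS]
  congr with r
  simp only [indicator, mem_Ioi, pospow, sub_pos, ite_mul, zero_mul, mul_ite, mul_zero]
  split_ifs <;> rfl

theorem ofReal_abs_mul_pospow_mul_abs (x y u γ : ℝ) :
    ENNReal.ofReal (|x| * pospow u γ * |y|) = ‖x‖ₑ * ENNReal.ofReal (pospow u γ) * ‖y‖ₑ := by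
  rw [ENNReal.ofReal_mul (mul_nonneg (abs_nonneg x) (pospow_nonneg u γ)),
    ENNReal.ofReal_mul (abs_nonneg x), Real.enorm_eq_ofReal_abs, Real.enorm_eq_ofReal_abs]

theorem Iplus_fractional_integration_by_parts_general (α : ℝ) (hα : α ∈ Set.Ioo (0:ℝ) (1/2))
    (a b : ℝ) (f g : ℝ → ℝ)
    (hf : MemLp f 2 (volume.restrict (Set.Ioo a b))) (hg : MemLp g 2 volume) :
    (∫⁻ t in Set.Ioo a b, ∫⁻ s : ℝ,
        ENNReal.ofReal (|f t| * pospow (t - s) (α - 1) * |g s|)) < ⊤ ∧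
    ∫ t in Set.Ioo a b, f t * Iplus α g t
      = ∫ s : ℝ, Iminus α (Set.indicator (Set.Ioo a b) f) s * g s := by
  have hfin := setLIntegral_lintegral_enorm_mul_pospow_mul_enorm_lt_top hα measure_Ioo_lt_top.ne
    hf hg
  refine ⟨by simpa only [ofReal_abs_mul_pospow_mul_abs] using hfin, ?_⟩
  have hint := integrable_prod_mul_kernel_mul (K := fun t s => pospow (t - s) (α - 1))
    hf.aestronglyMeasurable hg.aestronglyMeasurable
    (show Measurable (uncurry fun t s : ℝ => pospow (t - s) (α - 1)) from
      (measurable_pospow _).comp (measurable_fst.sub measurable_snd)).aestronglyMeasurable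
    (by simpa only [Real.enorm_of_nonneg (pospow_nonneg _ _)] using hfin)
  simp_rw [Iplus_eq_integral_pospow, Iminus_indicator_eq_setIntegral_pospow _ measurableSet_Ioo,
    mul_left_comm (f _), integral_const_mul, mul_assoc, integral_const_mul]
  rw [integral_mul_integral_kernel_swap hint]

theorem Iplus_fractional_integration_by_parts (α : ℝ) (hα : α ∈ Set.Ioo (0:ℝ) (1/2))
    (a b : ℝ) (hab : a < b) (f g : ℝ → ℝ)
    (hf : MemLp f 2 (volume.restrict (Set.Ioo a b))) (hg : MemLp g 2 volume) :
    (∫⁻ t in Set.Ioo a b, ∫⁻ s : ℝ,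
        ENNReal.ofReal (|f t| * pospow (t - s) (α - 1) * |g s|)) < ⊤ ∧
    ∫ t in Set.Ioo a b, f t * Iplus α g t
      = ∫ s : ℝ, Iminus α (Set.indicator (Set.Ioo a b) f) s * g s :=
  Iplus_fractional_integration_by_parts_general α hα a b f g hf hg
end

section
/- Let H ∈ (1/2, 1). Then the integral J_H = ∫_{[0,1]^4} |r₁-r₂|^{H-1} |r₂-r₃|^{H-1} |r₃-r₄|^{H-1} |r₄-r₁|^{H-1} dr₁ dr₂ dr₃ dr₄ is finite, and for every t > 0 one has ∫_{[0,t]^4} |r₁-r₂|^{H-1} |r₂-r₃|^{H-1} |r₃-r₄|^{H-1} |r₄-r₁|^{H-1} dr₁ dr₂ dr₃ dr₄ = t^{4H} · J_H. -/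
/-!
By AM–GM, `|k₁₂ k₂₃ k₃₄ k₄₁| ≤ (k₁₂² k₃₄² + k₂₃² k₄₁²) / 2`, and each term on the right is, up to
a measure-preserving permutation of the coordinates, a product of two copies of the kernel
`|x - y| ^ (2H - 2)` on a square. That kernel is integrable on bounded squares because
`2H - 2 > -1`: for a ball `B` containing the side, it agrees there with the convolution integrand
`1_B(y) · 1_{2B}(x - y) |x - y| ^ (2H - 2)` of two integrable functions. The scaling identity is
the change of variables `r ↦ t • r` in `ℝ⁴`, with Jacobian `t⁴`, combined with the homogeneity of
degree `4 (H - 1)` of the integrand.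
-/

open MeasureTheory Set Function
open scoped Pointwise

def cyclicProd {α : Type*} (k : α → α → ℝ) (r : α × α × α × α) : ℝ :=
  k r.1 r.2.1 * k r.2.1 r.2.2.1 * k r.2.2.1 r.2.2.2 * k r.2.2.2 r.1

lemma abs_mul_mul_mul_le (a b c d : ℝ) :
    |a * b * c * d| ≤ (a ^ 2 * c ^ 2 + b ^ 2 * d ^ 2) / 2 := by
  have h := two_mul_le_add_sq |a * c| |b * d|
  rw [sq_abs, sq_abs] at h
  calc |a * b * c * d| = |a * c| * |b * d| := by rw [← abs_mul]; ring_nf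
    _ ≤ ((a * c) ^ 2 + (b * d) ^ 2) / 2 := by linarith
    _ = (a ^ 2 * c ^ 2 + b ^ 2 * d ^ 2) / 2 := by ring

section CyclicProd

variable {α : Type*} [MeasurableSpace α] {μ : Measure α} [SFinite μ]

lemma measurePreserving_rotate :
    MeasurePreserving (fun r : α × α × α × α => (r.2.1, r.2.2.1, r.2.2.2, r.1))
      (μ.prod (μ.prod (μ.prod μ))) (μ.prod (μ.prod (μ.prod μ))) :=
  (((MeasurePreserving.id μ).prod (measurePreserving_prodAssoc μ μ μ)).comp
    (measurePreserving_prodAssoc μ (μ.prod μ) μ)).comp Measure.measurePreserving_swap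

variable {k : α → α → ℝ}

lemma integrable_sq_mul_sq_of_integrable_sq
    (hk : Integrable (fun q : α × α => k q.1 q.2 ^ 2) (μ.prod μ)) :
    Integrable (fun r : α × α × α × α => k r.1 r.2.1 ^ 2 * k r.2.2.1 r.2.2.2 ^ 2)
      (μ.prod (μ.prod (μ.prod μ))) :=
  ((measurePreserving_prodAssoc μ μ (μ.prod μ)).integrable_comp_emb
    MeasurableEquiv.prodAssoc.measurableEmbedding).mp (hk.mul_prod hk)

theorem integrable_cyclicProd (hk : Measurable (uncurry k))
    (hk2 : Integrable (fun q : α × α => k q.1 q.2 ^ 2) (μ.prod μ)) :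
    Integrable (cyclicProd k) (μ.prod (μ.prod (μ.prod μ))) := by
  have hP := integrable_sq_mul_sq_of_integrable_sq hk2
  have hQ : Integrable (fun r : α × α × α × α => k r.2.1 r.2.2.1 ^ 2 * k r.2.2.2 r.1 ^ 2)
      (μ.prod (μ.prod (μ.prod μ))) :=
    (measurePreserving_rotate.integrable_comp hP.aestronglyMeasurable).mpr hP
  have hmeas : Measurable (cyclicProd k) := by
    unfold cyclicProd
    fun_prop
  exact ((hP.add hQ).div_const 2).mono' hmeas.aestronglyMeasurable
    (Filter.Eventually.of_forall fun r => abs_mul_mul_mul_le _ _ _ _)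

end CyclicProd

lemma locallyIntegrable_abs_rpow {p : ℝ} (hp : -1 < p) :
    LocallyIntegrable (fun u : ℝ => |u| ^ p) :=
  locallyIntegrable_of_norm_le_rpow (by simp) (C := 1) (α := -p) (by simp; linarith)
    (Filter.Eventually.of_forall fun u => by
      simp [Real.norm_of_nonneg (Real.rpow_nonneg (abs_nonneg u) p)])
    (by fun_prop : Measurable fun u : ℝ => |u| ^ p).aestronglyMeasurable

theorem integrableOn_abs_sub_rpow {p : ℝ} (hp : -1 < p) {s : Set ℝ}
    (hs : Bornology.IsBounded s) :
    IntegrableOn (fun q : ℝ × ℝ => |q.1 - q.2| ^ p) (s ×ˢ s) := by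
  obtain ⟨R, hR⟩ := hs.subset_closedBall 0
  set B := Metric.closedBall (0 : ℝ) R
  set g := (Metric.closedBall (0 : ℝ) (2 * R)).indicator fun u : ℝ => |u| ^ p
  have hg : Integrable g :=
    ((locallyIntegrable_abs_rpow hp).integrableOn_isCompact
      (isCompact_closedBall _ _)).integrable_indicator measurableSet_closedBall
  have hB : Integrable (B.indicator (1 : ℝ → ℝ)) :=
    (integrable_indicator_iff measurableSet_closedBall).2
      (integrableOn_const measure_closedBall_lt_top.ne)
  have hconv := hB.convolution_integrand (ContinuousLinearMap.mul ℝ ℝ) hg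
  refine (hconv.integrableOn.congr_fun (fun q hq => ?_)
    (measurableSet_closedBall.prod measurableSet_closedBall)).mono_set (prod_mono hR hR)
  obtain ⟨hq1, hq2⟩ : |q.1| ≤ R ∧ |q.2| ≤ R := by simpa [B] using hq
  have hdist : |q.1 - q.2| ≤ 2 * R := by linarith [abs_sub q.1 q.2]
  simp [g, B, hq2, hdist]

theorem integrableOn_cyclicProd_abs_sub_rpow {p : ℝ} (hp : -1 / 2 < p) {s : Set ℝ}
    (hs : Bornology.IsBounded s) :
    IntegrableOn (cyclicProd fun x y : ℝ => |x - y| ^ p) (s ×ˢ s ×ˢ s ×ˢ s) := by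
  have hsq := integrableOn_abs_sub_rpow (p := p * 2) (by linarith) hs
  simp only [IntegrableOn, Measure.volume_eq_prod, ← Measure.prod_restrict] at hsq ⊢
  refine integrable_cyclicProd (by fun_prop) (hsq.congr (Filter.Eventually.of_forall fun q => ?_))
  exact Real.rpow_mul_natCast (abs_nonneg _) p 2

lemma cyclicProd_smul {E : Type*} [SMul ℝ E] {k : E → E → ℝ} {t c : ℝ}
    (hk : ∀ x y, k (t • x) (t • y) = c * k x y) (r : E × E × E × E) :
    cyclicProd k (t • r) = c ^ 4 * cyclicProd k r := by
  simp only [cyclicProd, Prod.smul_fst, Prod.smul_snd, hk]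
  ring

lemma abs_smul_sub_smul_rpow {t : ℝ} (ht : 0 ≤ t) (p x y : ℝ) :
    |t • x - t • y| ^ p = t ^ p * |x - y| ^ p := by
  rw [smul_eq_mul, smul_eq_mul, ← mul_sub, abs_mul, abs_of_nonneg ht,
    Real.mul_rpow ht (abs_nonneg _)]

theorem setIntegral_smul_set_of_map_smul {E : Type*} [NormedAddCommGroup E] [NormedSpace ℝ E]
    [FiniteDimensional ℝ E] [MeasurableSpace E] [BorelSpace E] (μ : Measure E)
    [μ.IsAddHaarMeasure] {f : E → ℝ} {t c : ℝ} (ht : 0 < t) (hf : ∀ x, f (t • x) = c * f x)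
    (s : Set E) :
    ∫ x in t • s, f x ∂μ = t ^ Module.finrank ℝ E * c * ∫ x in s, f x ∂μ := by
  have h := Measure.setIntegral_comp_smul_of_pos μ f s ht
  simp only [hf, integral_const_mul, smul_eq_mul] at h
  rw [mul_assoc, h, mul_inv_cancel_left₀ (by positivity)]

-- Instance search does not find these by nesting `Measure.prod.instIsAddHaarMeasure`.
instance : (volume : Measure (ℝ × ℝ × ℝ)).IsAddHaarMeasure :=
  Measure.prod.instIsAddHaarMeasure _ _

instance : (volume : Measure (ℝ × ℝ × ℝ × ℝ)).IsAddHaarMeasure :=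
  Measure.prod.instIsAddHaarMeasure _ _

theorem setIntegral_smul_set_cyclicProd_abs_sub_rpow (p : ℝ) {t : ℝ} (ht : 0 < t)
    (s : Set (ℝ × ℝ × ℝ × ℝ)) :
    ∫ r in t • s, cyclicProd (fun x y : ℝ => |x - y| ^ p) r
      = t ^ (4 * (p + 1)) * ∫ r in s, cyclicProd (fun x y : ℝ => |x - y| ^ p) r := by
  rw [setIntegral_smul_set_of_map_smul volume ht
    (cyclicProd_smul (abs_smul_sub_smul_rpow ht.le p))]
  have hdim : Module.finrank ℝ (ℝ × ℝ × ℝ × ℝ) = 4 := by simp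
  rw [hdim, ← Real.rpow_mul_natCast ht.le, ← Real.rpow_natCast, ← Real.rpow_add ht]
  ring_nf

theorem cyclic_four_kernel_integrable_and_scaling (H : ℝ) (hH : H ∈ Set.Ioo (1/2 : ℝ) 1) :
    IntegrableOn
      (fun r : ℝ × ℝ × ℝ × ℝ =>
        |r.1 - r.2.1| ^ (H - 1) * |r.2.1 - r.2.2.1| ^ (H - 1)
          * |r.2.2.1 - r.2.2.2| ^ (H - 1) * |r.2.2.2 - r.1| ^ (H - 1))
      (Set.Ioo (0:ℝ) 1 ×ˢ Set.Ioo (0:ℝ) 1 ×ˢ Set.Ioo (0:ℝ) 1 ×ˢ Set.Ioo (0:ℝ) 1) volume ∧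
    ∀ t : ℝ, 0 < t →
      ∫ r : ℝ × ℝ × ℝ × ℝ in
          Set.Ioo (0:ℝ) t ×ˢ Set.Ioo (0:ℝ) t ×ˢ Set.Ioo (0:ℝ) t ×ˢ Set.Ioo (0:ℝ) t,
          |r.1 - r.2.1| ^ (H - 1) * |r.2.1 - r.2.2.1| ^ (H - 1)
            * |r.2.2.1 - r.2.2.2| ^ (H - 1) * |r.2.2.2 - r.1| ^ (H - 1)
        = t ^ (4 * H) *
          ∫ r : ℝ × ℝ × ℝ × ℝ in
            Set.Ioo (0:ℝ) 1 ×ˢ Set.Ioo (0:ℝ) 1 ×ˢ Set.Ioo (0:ℝ) 1 ×ˢ Set.Ioo (0:ℝ) 1,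
            |r.1 - r.2.1| ^ (H - 1) * |r.2.1 - r.2.2.1| ^ (H - 1)
              * |r.2.2.1 - r.2.2.2| ^ (H - 1) * |r.2.2.2 - r.1| ^ (H - 1) := by
  refine ⟨integrableOn_cyclicProd_abs_sub_rpow (by linarith [hH.1]) (Metric.isBounded_Ioo 0 1),
    fun t ht => ?_⟩
  have hcube : t • (Ioo (0 : ℝ) 1 ×ˢ Ioo (0 : ℝ) 1 ×ˢ Ioo (0 : ℝ) 1 ×ˢ Ioo (0 : ℝ) 1)
      = Ioo (0 : ℝ) t ×ˢ Ioo (0 : ℝ) t ×ˢ Ioo (0 : ℝ) t ×ˢ Ioo (0 : ℝ) t := by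
    simp [Set.smul_set_prod, LinearOrderedField.smul_Ioo ht]
  have h := setIntegral_smul_set_cyclicProd_abs_sub_rpow (H - 1) ht
    (Ioo (0 : ℝ) 1 ×ˢ Ioo (0 : ℝ) 1 ×ˢ Ioo (0 : ℝ) 1 ×ˢ Ioo (0 : ℝ) 1)
  rwa [hcube, sub_add_cancel] at h
end
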